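/- arXiv:1510.02044 — 2 statements merged into one kernel-verified Lean document; each statement's English description precedes it below -/
import Mathlib

section
/- Let V be a real vector space carrying an almost paracontact structure (φ, ξ, η) and a compatible symmetric bilinear form g, let W ⊆ V be a subspace with a tangential–normal decomposition φ = t + n on W, and let D ⊆ W be a subspace that is slant with slant coefficient λ, i.e. t(tX) = λ(X − η(X)ξ) for all X ∈ D. Then g(tX, tY) = λ · g(φX, φY) for all X, Y ∈ D. -/
/-- For an almost paracontact structure `(φ, ξ, η)` with a compatible symmetric
bilinear form `g`, a subspace `W ⊆ V` with a tangential–normal decomposition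
`φ = t + n` on `W`, and a slant subspace `D ⊆ W` with slant coefficient `λ`
(i.e. `t(tX) = λ(X - η(X)ξ)` on `D`), one has
`g(tX, tY) = λ · g(φX, φY)` for all `X, Y ∈ D`. -/
theorem slant_g_t_t
    {V : Type*} [AddCommGroup V] [Module ℝ V]
    (φ : V →ₗ[ℝ] V) (η : V →ₗ[ℝ] ℝ) (ξ : V)
    (g : LinearMap.BilinForm ℝ V)
    (hsymm : ∀ X Y : V, g X Y = g Y X)
    (hφ : ∀ X : V, φ (φ X) = X - η X • ξ) (hη : η ξ = 1)
    (hg : ∀ X Y : V, g X Y = -g (φ X) (φ Y) + η X * η Y)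
    (W : Submodule ℝ V) (t : W →ₗ[ℝ] W) (n : W →ₗ[ℝ] V)
    (hdecomp : ∀ X : W, φ (X : V) = (t X : V) + n X)
    (hnormal : ∀ X Y : W, g (n X) (Y : V) = 0)
    (D : Submodule ℝ W) (lam : ℝ)
    (hslant : ∀ X ∈ D, ((t (t X) : W) : V) = lam • ((X : V) - η (X : V) • ξ)) :
    ∀ X ∈ D, ∀ Y ∈ D,
      g ((t X : W) : V) ((t Y : W) : V) = lam * g (φ (X : V)) (φ (Y : V)) := by
  have hξne : ξ ≠ 0 := by
    intro h
    rw [h, map_zero] at hη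
    exact one_ne_zero hη.symm
  have hφξ : φ ξ = 0 := by
    have h0 : φ (φ ξ) = 0 := by rw [hφ ξ, hη, one_smul, sub_self]
    have h1 : φ (φ (φ ξ)) = φ ξ - η (φ ξ) • ξ := hφ (φ ξ)
    rw [h0, map_zero] at h1
    have h2 : φ ξ = η (φ ξ) • ξ := sub_eq_zero.mp h1.symm
    have h3 : (η (φ ξ) * η (φ ξ)) • ξ = 0 := by
      calc (η (φ ξ) * η (φ ξ)) • ξ = η (φ ξ) • (η (φ ξ) • ξ) := (smul_smul _ _ _).symm
        _ = η (φ ξ) • φ ξ := by rw [← h2]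
        _ = φ (η (φ ξ) • ξ) := (map_smul φ _ _).symm
        _ = φ (φ ξ) := by rw [← h2]
        _ = 0 := h0
    rcases smul_eq_zero.mp h3 with h4 | h4
    · have h5 : η (φ ξ) = 0 := by nlinarith
      rw [h2, h5, zero_smul]
    · exact absurd h4 hξne
  have hηφ : ∀ X : V, η (φ X) = 0 := by
    intro X
    have h1 : φ (φ (φ X)) = φ X - η (φ X) • ξ := hφ (φ X)
    have h2 : φ (φ (φ X)) = φ X := by
      rw [hφ X, map_sub, map_smul, hφξ, smul_zero, sub_zero]
    rw [h2] at h1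
    have h3 : η (φ X) • ξ = 0 := sub_eq_self.mp h1.symm
    rcases smul_eq_zero.mp h3 with h4 | h4
    · exact h4
    · exact absurd h4 hξne
  have hgξφ : ∀ Y : V, g ξ (φ Y) = 0 := by
    intro Y
    rw [hg ξ (φ Y), hφξ, map_zero, LinearMap.zero_apply, hηφ]
    ring
  have hskew : ∀ X Y : V, g (φ X) Y = -g X (φ Y) := by
    intro X Y
    rw [hg (φ X) Y, hφ X, hηφ]
    rw [map_sub, LinearMap.sub_apply, map_smul, LinearMap.smul_apply, hgξφ]
    simp
  have hgξ : ∀ Y : V, g Y ξ = η Y := by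
    intro Y
    rw [hg Y ξ, hφξ, map_zero, hη]
    ring
  intro X hX Y hY
  have hdY : ((t Y : W) : V) = φ (Y : V) - n Y := by
    rw [hdecomp Y]; abel
  have e1 : g ((t X : W) : V) ((t Y : W) : V)
      = g ((t X : W) : V) (φ (Y : V)) := by
    rw [hdY, map_sub]
    have h : g ((t X : W) : V) (n Y) = 0 := by
      rw [hsymm]; exact hnormal Y (t X)
    rw [h, sub_zero]
  have e2 : g ((t X : W) : V) (φ (Y : V)) = -g (Y : V) (φ ((t X : W) : V)) := by
    rw [hsymm, hskew]
  have e3 : φ ((t X : W) : V) = ((t (t X) : W) : V) + n (t X) := hdecomp (t X)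
  have e4 : g (Y : V) (φ ((t X : W) : V)) = g (Y : V) ((t (t X) : W) : V) := by
    rw [e3, map_add]
    have h : g (Y : V) (n (t X)) = 0 := by
      rw [hsymm]; exact hnormal (t X) Y
    rw [h, add_zero]
  have e5 : g (φ (X : V)) (φ (Y : V))
      = η (X : V) * η (Y : V) - g (X : V) (Y : V) := by
    have := hg (X : V) (Y : V)
    linarith
  rw [e1, e2, e4, hslant X hX, map_smul, map_sub, map_smul, hgξ, e5,
    hsymm (Y : V) (X : V)]
  simp only [smul_eq_mul]
  ring
end

section
/- Let V be a real vector space carrying an almost paracontact structure (φ, ξ, η) and a compatible symmetric bilinear form g, let W ⊆ V be a subspace with a tangential–normal decomposition φ = t + n on W, and let D ⊆ W be a subspace that is slant with slant coefficient λ, i.e. t(tX) = λ(X − η(X)ξ) for all X ∈ D. Then g(nX, nY) = (1 − λ) · g(φX, φY) for all X, Y ∈ D. -/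
/-- For an almost paracontact structure `(φ, ξ, η)` with a compatible symmetric
bilinear form `g`, a subspace `W ⊆ V` with a tangential–normal decomposition
`φ = t + n` on `W`, and a slant subspace `D ⊆ W` with slant coefficient `λ`
(i.e. `t(tX) = λ(X - η(X)ξ)` on `D`), one has
`g(nX, nY) = (1 - λ) · g(φX, φY)` for all `X, Y ∈ D`. -/
theorem slant_g_n_n
    {V : Type*} [AddCommGroup V] [Module ℝ V]
    (φ : V →ₗ[ℝ] V) (η : V →ₗ[ℝ] ℝ) (ξ : V)
    (g : LinearMap.BilinForm ℝ V)
    (hsymm : ∀ X Y : V, g X Y = g Y X)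
    (hφ : ∀ X : V, φ (φ X) = X - η X • ξ) (hη : η ξ = 1)
    (hg : ∀ X Y : V, g X Y = -g (φ X) (φ Y) + η X * η Y)
    (W : Submodule ℝ V) (t : W →ₗ[ℝ] W) (n : W →ₗ[ℝ] V)
    (hdecomp : ∀ X : W, φ (X : V) = (t X : V) + n X)
    (hnormal : ∀ X Y : W, g (n X) (Y : V) = 0)
    (D : Submodule ℝ W) (lam : ℝ)
    (hslant : ∀ X ∈ D, ((t (t X) : W) : V) = lam • ((X : V) - η (X : V) • ξ)) :
    ∀ X ∈ D, ∀ Y ∈ D,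
      g (n X) (n Y) = (1 - lam) * g (φ (X : V)) (φ (Y : V)) := by
  -- ξ ≠ 0
  have hξne : ξ ≠ 0 := by
    intro h
    rw [h, map_zero] at hη
    norm_num at hη
  -- φ ξ = 0
  have hφξ : φ ξ = 0 := by
    have h1 : φ (φ ξ) = 0 := by rw [hφ, hη, one_smul, sub_self]
    have h2 : φ (φ (φ ξ)) = φ ξ - η (φ ξ) • ξ := hφ (φ ξ)
    rw [h1, map_zero] at h2
    have h3 : φ ξ = η (φ ξ) • ξ := by
      linear_combination (norm := module) -h2
    have h4 : (η (φ ξ) * η (φ ξ)) • ξ = 0 := by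
      calc (η (φ ξ) * η (φ ξ)) • ξ = η (φ ξ) • (η (φ ξ) • ξ) := by
            rw [smul_smul]
        _ = η (φ ξ) • φ ξ := by rw [← h3]
        _ = φ (η (φ ξ) • ξ) := by rw [map_smul]
        _ = φ (φ ξ) := by rw [← h3]
        _ = 0 := h1
    rcases smul_eq_zero.mp h4 with h5 | h5
    · have h6 : η (φ ξ) = 0 := by nlinarith
      rw [h3, h6, zero_smul]
    · exact absurd h5 hξne
  -- η ∘ φ = 0
  have hηφ : ∀ Z : V, η (φ Z) = 0 := by
    intro Z
    have h1 : φ (φ (φ Z)) = φ Z - η (φ Z) • ξ := hφ (φ Z)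
    have h2 : φ (φ (φ Z)) = φ Z := by
      rw [hφ Z, map_sub, map_smul, hφξ, smul_zero, sub_zero]
    rw [h2] at h1
    have h3 : η (φ Z) • ξ = 0 := sub_eq_self.mp h1.symm
    rcases smul_eq_zero.mp h3 with h | h
    · exact h
    · exact absurd h hξne
  -- g(φ A, ξ) = 0
  have hgφξ : ∀ A : V, g (φ A) ξ = 0 := by
    intro A
    rw [hg, hφξ, hηφ]
    simp
  -- skew-adjointness: g(A, φ B) = - g(φ A, B)
  have hskew : ∀ A B : V, g A (φ B) = - g (φ A) B := by
    intro A B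
    have h1 : g A (φ B) = -g (φ A) (φ (φ B)) + η A * η (φ B) := hg A (φ B)
    rw [hηφ, mul_zero, add_zero, hφ B, map_sub, map_smul] at h1
    rw [h1, hgφξ]
    simp
  intro X hX Y hY
  -- g ξ B = η B
  have hgξ : ∀ B : V, g ξ B = η B := by
    intro B
    rw [hsymm, hg, hφξ]
    simp [hη]
  -- expand φ (φ X)
  have e1 : φ (φ (X : V)) = ((t (t X) : W) : V) + n (t X) + φ (n X) := by
    rw [hdecomp X, map_add, hdecomp (t X)]
  have e2 : g (φ (φ (X : V))) (Y : V)
      = g ((t (t X) : W) : V) (Y : V) + g (φ (n X)) (Y : V) := by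
    rw [e1, map_add, map_add]
    simp [hnormal (t X) Y]
  -- g (φ (n X)) Y = - g (n X) (n Y)
  have e3 : g (φ (n X)) (Y : V) = - g (n X) (n Y) := by
    have h1 : g (n X) (φ (Y : V)) = - g (φ (n X)) (Y : V) := hskew _ _
    rw [hdecomp Y, map_add, hnormal X (t Y), zero_add] at h1
    linarith
  -- LHS via hφ
  have e4 : g (φ (φ (X : V))) (Y : V)
      = g (X : V) (Y : V) - η (X : V) * η (Y : V) := by
    rw [hφ, map_sub, LinearMap.sub_apply, map_smul, LinearMap.smul_apply,
      hgξ, smul_eq_mul]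
  -- slant condition
  have e5 : g ((t (t X) : W) : V) (Y : V)
      = lam * (g (X : V) (Y : V) - η (X : V) * η (Y : V)) := by
    rw [hslant X hX, map_smul, LinearMap.smul_apply, map_sub,
      LinearMap.sub_apply, map_smul, LinearMap.smul_apply, hgξ,
      smul_eq_mul, smul_eq_mul]
  -- compatibility for φX, φY
  have e6 : g (φ (X : V)) (φ (Y : V))
      = η (X : V) * η (Y : V) - g (X : V) (Y : V) := by
    have := hg (X : V) (Y : V)
    linarith
  rw [e4, e5] at e2
  rw [e3] at e2
  rw [e6]
  linarith
end
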